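/- Let S be a sequence of meromorphic functions on a domain D ⊆ ℂ and let E be its set of non-C₀-points in D. Then E is at most countable if and only if S is a C_α-sequence in D for some countable ordinal α. -/

import Mathlib

open Filter Set Metric

/-- Iterated (transfinite) derived set of `E` with respect to `A`:
`E_A^(0) = E`, `E_A^(α+1) = (E_A^(α))' ∩ A`, and at limit stages the
intersection over `1 ≤ β < α`. -/
noncomputable def derivIter (A : Set ℂ) (E : Set ℂ) (o : Ordinal) : Set ℂ :=
  Ordinal.limitRecOn o E
    (fun _ ih => {z | z ∈ A ∧ AccPt z (Filter.principal ih)})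
    (fun o _ ih => ⋂ (β : Ordinal) (h : β < o) (_ : 1 ≤ β), ih β h)

/-- The chordal (spherical) distance on the Riemann sphere, with `none` playing the
role of the point at infinity. -/
noncomputable def sphDist : Option ℂ → Option ℂ → ℝ
  | some a, some b =>
      2 * ‖a - b‖ /
        (Real.sqrt (1 + ‖a‖ ^ 2) * Real.sqrt (1 + ‖b‖ ^ 2))
  | some a, none => 2 / Real.sqrt (1 + ‖a‖ ^ 2)
  | none, some b => 2 / Real.sqrt (1 + ‖b‖ ^ 2)
  | none, none => 0

/-- `z₀` is a `C₀`-point of the sequence `S` in `D`: on some disk `Δ(z₀,r) ⊆ D`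
the sequence converges uniformly with respect to the spherical distance
(to a limit function with values in the Riemann sphere). -/
def C0Point (D : Set ℂ) (S : ℕ → ℂ → ℂ) (z₀ : ℂ) : Prop :=
  ∃ r > (0 : ℝ), Metric.ball z₀ r ⊆ D ∧
    ∃ g : ℂ → Option ℂ, ∀ ε > (0 : ℝ), ∃ N : ℕ, ∀ n ≥ N, ∀ z ∈ Metric.ball z₀ r,
      sphDist (some (S n z)) (g z) < ε

/-- `CPoint D S α z₀` : `z₀` is a `C_α`-point of `S` in `D`. At a successor `α`,
every point of some punctured disk `Δ'(z₀,r)` with `Δ(z₀,r) ⊆ D` is a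
`C_{α-1}`-point; at a limit `α`, `z₀` is a `C_β`-point for some `β < α`. -/
noncomputable def CPoint (D : Set ℂ) (S : ℕ → ℂ → ℂ) (α : Ordinal) : ℂ → Prop :=
  Ordinal.limitRecOn α (C0Point D S)
    (fun _ ih => fun z₀ => ∃ r > (0 : ℝ), Metric.ball z₀ r ⊆ D ∧
      ∀ z ∈ Metric.ball z₀ r \ {z₀}, ih z)
    (fun α _ ih => fun z₀ => ∃ β : Ordinal, ∃ h : β < α, ih β h z₀)

/-! ### Auxiliary lemmas -/

section Aux

lemma derivIter_zero' (A E : Set ℂ) : derivIter A E 0 = E := Ordinal.limitRecOn_zero ..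

lemma derivIter_succ' (A E : Set ℂ) (o : Ordinal) :
    derivIter A E (Order.succ o) = {z | z ∈ A ∧ AccPt z (𝓟 (derivIter A E o))} :=
  Ordinal.limitRecOn_succ ..

lemma derivIter_limit' (A E : Set ℂ) (o : Ordinal) (h : Order.IsSuccLimit o) :
    derivIter A E o = ⋂ (β : Ordinal) (_ : β < o) (_ : 1 ≤ β), derivIter A E β :=
  Ordinal.limitRecOn_limit _ _ _ _ h

lemma cpoint_zero' (D : Set ℂ) (S : ℕ → ℂ → ℂ) : CPoint D S 0 = C0Point D S :=
  Ordinal.limitRecOn_zero ..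

lemma cpoint_succ' (D : Set ℂ) (S : ℕ → ℂ → ℂ) (o : Ordinal) :
    CPoint D S (Order.succ o) = fun z₀ => ∃ r > (0 : ℝ), Metric.ball z₀ r ⊆ D ∧
      ∀ z ∈ Metric.ball z₀ r \ {z₀}, CPoint D S o z :=
  Ordinal.limitRecOn_succ ..

lemma cpoint_limit' (D : Set ℂ) (S : ℕ → ℂ → ℂ) (o : Ordinal) (h : Order.IsSuccLimit o) :
    CPoint D S o = fun z₀ => ∃ β : Ordinal, ∃ _ : β < o, CPoint D S β z₀ :=
  Ordinal.limitRecOn_limit _ _ _ _ h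

/-- The set of `C₀`-points is "ball-open". -/
lemma c0_ball (D : Set ℂ) (S : ℕ → ℂ → ℂ) (z₀ : ℂ) (h : C0Point D S z₀) :
    ∃ r > (0 : ℝ), Metric.ball z₀ r ⊆ D ∧ ∀ w ∈ Metric.ball z₀ r, C0Point D S w := by
  obtain ⟨r, hr, hball, g, hg⟩ := h
  refine ⟨r, hr, hball, fun w hw => ?_⟩
  have hsub : Metric.ball w (r - dist w z₀) ⊆ Metric.ball z₀ r :=
    Metric.ball_subset_ball' (by simp)
  exact ⟨r - dist w z₀, by simpa [Metric.mem_ball] using hw, hsub.trans hball, g,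
    fun ε hε => (hg ε hε).imp fun N hN n hn z hz => hN n hn z (hsub hz)⟩

/-- The set of isolated points of a planar set is countable. -/
lemma countable_isolated (s : Set ℂ) : {z | z ∈ s ∧ ¬ AccPt z (𝓟 s)}.Countable := by
  obtain ⟨b, bct, -, bbasis⟩ := TopologicalSpace.exists_countable_basis ℂ
  have key : ∀ z ∈ {z | z ∈ s ∧ ¬ AccPt z (𝓟 s)}, ∃ U ∈ b, U ∩ s = {z} := by
    rintro z ⟨hzs, hz⟩
    rw [accPt_iff_nhds] at hz
    push_neg at hz
    obtain ⟨U, hU, hU2⟩ := hz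
    obtain ⟨V, hVb, hzV, hVU⟩ := bbasis.mem_nhds_iff.mp hU
    refine ⟨V, hVb, Set.eq_singleton_iff_unique_mem.mpr
      ⟨⟨hzV, hzs⟩, fun y hy => hU2 y ⟨hVU hy.1, hy.2⟩⟩⟩
  choose! f hf1 hf2 using key
  have hmaps : Set.MapsTo f {z | z ∈ s ∧ ¬ AccPt z (𝓟 s)} b := hf1
  have hinj : Set.InjOn f {z | z ∈ s ∧ ¬ AccPt z (𝓟 s)} := by
    intro x hx y hy hxy
    have := (hf2 x hx).symm.trans (hxy ▸ hf2 y hy)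
    exact Set.singleton_eq_singleton_iff.mp this
  exact hmaps.countable_of_injOn hinj bct

variable {D : Set ℂ} {S : ℕ → ℂ → ℂ} {E : Set ℂ}

/-- The iterated derived sets stay in `D` and are relatively closed in `D`. -/
lemma derivIter_subset_closed (hE : E ⊆ D)
    (hEc : ∀ z ∈ D ∩ closure E, z ∈ E) (α : Ordinal) :
    derivIter D E α ⊆ D ∧ ∀ z ∈ D ∩ closure (derivIter D E α), z ∈ derivIter D E α := by
  induction α using Ordinal.induction with
  | h α IH =>
    rcases Ordinal.zero_or_succ_or_isSuccLimit α with rfl | ⟨o, rfl⟩ | hlim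
    · rw [derivIter_zero']; exact ⟨hE, hEc⟩
    · rw [derivIter_succ']
      constructor
      · exact fun z hz => hz.1
      · rintro z ⟨hzD, hzcl⟩
        have h1 : closure {z | z ∈ D ∧ AccPt z (𝓟 (derivIter D E o))} ⊆
            closure (derivedSet (derivIter D E o)) :=
          closure_mono (fun w hw => hw.2)
        have h2 := (isClosed_derivedSet (derivIter D E o)).closure_subset (h1 hzcl)
        exact ⟨hzD, h2⟩
    · rw [derivIter_limit' _ _ _ hlim]
      constructor
      · intro z hz
        have h1 : z ∈ derivIter D E 1 := by
          simp only [Set.mem_iInter] at hz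
          exact hz 1 (Ordinal.one_lt_of_isSuccLimit hlim) le_rfl
        have : derivIter D E 1 ⊆ D := by
          have := (IH 1 (Ordinal.one_lt_of_isSuccLimit hlim)).1
          exact this
        exact this h1
      · rintro z ⟨hzD, hzcl⟩
        refine Set.mem_iInter.mpr fun β => Set.mem_iInter.mpr fun hβ => Set.mem_iInter.mpr fun hβ1 => ?_
        have hsub : (⋂ (β : Ordinal) (_ : β < α) (_ : 1 ≤ β), derivIter D E β) ⊆ derivIter D E β := by
          intro w hw
          simp only [Set.mem_iInter] at hw
          exact hw β hβ hβ1
        exact (IH β hβ).2 z ⟨hzD, closure_mono hsub hzcl⟩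

lemma derivIter_succ_subset (hE : E ⊆ D)
    (hEc : ∀ z ∈ D ∩ closure E, z ∈ E) (α : Ordinal) :
    derivIter D E (Order.succ α) ⊆ derivIter D E α := by
  rw [derivIter_succ']
  rintro z ⟨hzD, hacc⟩
  exact (derivIter_subset_closed hE hEc α).2 z ⟨hzD, derivedSet_subset_closure _ hacc⟩

lemma derivIter_anti (hE : E ⊆ D)
    (hEc : ∀ z ∈ D ∩ closure E, z ∈ E) :
    ∀ γ : Ordinal, ∀ β ≤ γ, derivIter D E γ ⊆ derivIter D E β := by
  intro γ
  induction γ using Ordinal.induction with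
  | h γ IH =>
    intro β hβ
    rcases eq_or_lt_of_le hβ with rfl | hlt
    · exact subset_rfl
    rcases Ordinal.zero_or_succ_or_isSuccLimit γ with rfl | ⟨o, rfl⟩ | hlim
    · exact absurd hlt not_lt_zero
    · have hle : β ≤ o := Order.lt_succ_iff.mp hlt
      exact (derivIter_succ_subset hE hEc o).trans (IH o (Order.lt_succ o) β hle)
    · rcases le_or_gt 1 β with h1 | h1
      · rw [derivIter_limit' _ _ _ hlim]
        intro w hw
        simp only [Set.mem_iInter] at hw
        exact hw β hlt h1
      · have hβ0 : β = 0 := Ordinal.lt_one_iff_zero.mp h1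
        subst hβ0
        have hsub1 : derivIter D E γ ⊆ derivIter D E 1 := by
          rw [derivIter_limit' _ _ _ hlim]
          intro w hw
          simp only [Set.mem_iInter] at hw
          exact hw 1 (Ordinal.one_lt_of_isSuccLimit hlim) le_rfl
        have : derivIter D E 1 ⊆ derivIter D E 0 := by
          have := derivIter_succ_subset hE hEc 0
          rwa [Ordinal.succ_zero] at this
        exact hsub1.trans this

/-- `C_α`-points come in balls. -/
lemma cpoint_ball : ∀ α : Ordinal, ∀ z : ℂ, CPoint D S α z →
    ∃ r > (0 : ℝ), Metric.ball z r ⊆ D ∧ ∀ w ∈ Metric.ball z r, CPoint D S α w := by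
  intro α
  induction α using Ordinal.induction with
  | h α IH =>
    intro z hz
    rcases Ordinal.zero_or_succ_or_isSuccLimit α with rfl | ⟨o, rfl⟩ | hlim
    · rw [cpoint_zero'] at hz ⊢
      exact c0_ball D S z hz
    · rw [cpoint_succ'] at hz
      obtain ⟨r, hr, hball, hp⟩ := hz
      refine ⟨r, hr, hball, fun w hw => ?_⟩
      rcases eq_or_ne w z with rfl | hwz
      · rw [cpoint_succ']; exact ⟨r, hr, hball, hp⟩
      · rw [cpoint_succ']
        have hd : (0 : ℝ) < dist w z := dist_pos.mpr hwz
        have hd2 : (0 : ℝ) < r - dist w z := by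
          rw [Metric.mem_ball] at hw; linarith
        refine ⟨min (dist w z) (r - dist w z), lt_min hd hd2, ?_, ?_⟩
        · intro y hy
          apply hball
          have : Metric.ball w (r - dist w z) ⊆ Metric.ball z r :=
            Metric.ball_subset_ball' (by simp)
          exact this (Metric.ball_subset_ball (min_le_right _ _) hy)
        · rintro y ⟨hy1, hy2⟩
          apply hp
          constructor
          · have : Metric.ball w (r - dist w z) ⊆ Metric.ball z r :=
              Metric.ball_subset_ball' (by simp)
            exact this (Metric.ball_subset_ball (min_le_right _ _) hy1)
          · simp only [Set.mem_singleton_iff]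
            intro hyz
            subst hyz
            rw [Metric.mem_ball] at hy1
            have := min_le_left (dist w y) (r - dist w y)
            rw [dist_comm y w] at hy1
            linarith
    · rw [cpoint_limit' _ _ _ hlim] at hz
      obtain ⟨β, hβ, hzβ⟩ := hz
      obtain ⟨r, hr, hball, hp⟩ := IH β hβ z hzβ
      refine ⟨r, hr, hball, fun w hw => ?_⟩
      rw [cpoint_limit' _ _ _ hlim]
      exact ⟨β, hβ, hp w hw⟩

/-- A `C_α`-point of `D` is not in the `α`-th derived set. -/
lemma cpoint_notin_deriv (hE : E = {z | z ∈ D ∧ ¬ C0Point D S z}) :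
    ∀ α : Ordinal, ∀ z ∈ D, CPoint D S α z → z ∉ derivIter D E α := by
  intro α
  induction α using Ordinal.induction with
  | h α IH =>
    intro z hzD hz
    rcases Ordinal.zero_or_succ_or_isSuccLimit α with rfl | ⟨o, rfl⟩ | hlim
    · rw [cpoint_zero'] at hz
      rw [derivIter_zero', hE]
      exact fun h => h.2 hz
    · rw [cpoint_succ'] at hz
      obtain ⟨r, hr, hball, hp⟩ := hz
      rw [derivIter_succ']
      rintro ⟨-, hacc⟩
      rw [accPt_iff_nhds] at hacc
      obtain ⟨y, ⟨hy1, hy2⟩, hy3⟩ := hacc (Metric.ball z r) (Metric.ball_mem_nhds z hr)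
      have hyC : CPoint D S o y := hp y ⟨hy1, hy3⟩
      exact IH o (Order.lt_succ o) y (hball hy1) hyC hy2
    · rw [cpoint_limit' _ _ _ hlim] at hz
      obtain ⟨β, hβ, hzβ⟩ := hz
      rw [derivIter_limit' _ _ _ hlim]
      intro hmem
      simp only [Set.mem_iInter] at hmem
      rcases le_or_gt 1 β with h1 | h1
      · exact IH β hβ z hzD hzβ (hmem β hβ h1)
      · have hβ0 : β = 0 := Ordinal.lt_one_iff_zero.mp h1
        subst hβ0
        rw [cpoint_zero'] at hzβ
        obtain ⟨r, hr, hball, hC0⟩ := c0_ball D S z hzβ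
        have h1mem := hmem 1 (Ordinal.one_lt_of_isSuccLimit hlim) le_rfl
        have : derivIter D E 1 = derivIter D E (Order.succ 0) := by rw [Ordinal.succ_zero]
        rw [this, derivIter_succ', derivIter_zero'] at h1mem
        obtain ⟨-, hacc⟩ := h1mem
        rw [accPt_iff_nhds] at hacc
        obtain ⟨y, ⟨hy1, hy2⟩, -⟩ := hacc (Metric.ball z r) (Metric.ball_mem_nhds z hr)
        rw [hE] at hy2
        exact hy2.2 (hC0 y hy1)

/-- A point of `D` not in the `α`-th derived set is a `C_α`-point. -/
lemma notin_deriv_cpoint (hD : IsOpen D) (hE : E = {z | z ∈ D ∧ ¬ C0Point D S z}) :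
    ∀ α : Ordinal, ∀ z ∈ D, z ∉ derivIter D E α → CPoint D S α z := by
  intro α
  induction α using Ordinal.induction with
  | h α IH =>
    intro z hzD hz
    rcases Ordinal.zero_or_succ_or_isSuccLimit α with rfl | ⟨o, rfl⟩ | hlim
    · rw [derivIter_zero', hE] at hz
      rw [cpoint_zero']
      by_contra hC
      exact hz ⟨hzD, hC⟩
    · rw [derivIter_succ'] at hz
      have hnacc : ¬ AccPt z (𝓟 (derivIter D E o)) := fun h => hz ⟨hzD, h⟩
      rw [accPt_iff_nhds] at hnacc
      push_neg at hnacc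
      obtain ⟨U, hU, hU2⟩ := hnacc
      obtain ⟨r1, hr1, hball1⟩ := Metric.mem_nhds_iff.mp hU
      obtain ⟨r2, hr2, hball2⟩ := Metric.isOpen_iff.mp hD z hzD
      rw [cpoint_succ']
      refine ⟨min r1 r2, lt_min hr1 hr2, (Metric.ball_subset_ball (min_le_right _ _)).trans hball2,
        ?_⟩
      rintro y ⟨hy1, hy2⟩
      have hyD : y ∈ D := hball2 (Metric.ball_subset_ball (min_le_right _ _) hy1)
      have hyE : y ∉ derivIter D E o := by
        intro hmem
        exact hy2 (hU2 y ⟨hball1 (Metric.ball_subset_ball (min_le_left _ _) hy1), hmem⟩)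
      exact IH o (Order.lt_succ o) y hyD hyE
    · rw [derivIter_limit' _ _ _ hlim] at hz
      simp only [Set.mem_iInter, not_forall] at hz
      obtain ⟨β, hβ, hβ1, hzβ⟩ := hz
      rw [cpoint_limit' _ _ _ hlim]
      exact ⟨β, hβ, IH β hβ z hzD hzβ⟩

/-- A nonempty relatively-closed preperfect subset of an open planar set is uncountable. -/
lemma preperfect_uncountable {T : Set ℂ} (hD : IsOpen D) (hT : T ⊆ D)
    (hTc : ∀ z ∈ D ∩ closure T, z ∈ T)
    (hpre : ∀ z ∈ T, AccPt z (𝓟 T)) (hne : T.Nonempty) : ¬ T.Countable := by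
  intro hct
  obtain ⟨z, hzT⟩ := hne
  obtain ⟨r, hr, hball⟩ := Metric.isOpen_iff.mp hD z (hT hzT)
  set B := Metric.ball z (r / 2) with hB
  have hpre2 : Preperfect (B ∩ T) :=
    (Preperfect.open_inter (fun w hw => hpre w hw) Metric.isOpen_ball)
  have hK : Perfect (closure (B ∩ T)) := hpre2.perfect_closure
  have hKsub : closure (B ∩ T) ⊆ T := by
    intro w hw
    apply hTc
    constructor
    · have h1 : closure (B ∩ T) ⊆ closure B := closure_mono Set.inter_subset_left
      have h2 : closure B ⊆ Metric.closedBall z (r / 2) := Metric.closure_ball_subset_closedBall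
      have h3 : Metric.closedBall z (r / 2) ⊆ Metric.ball z r :=
        Metric.closedBall_subset_ball (by linarith)
      exact hball (h3 (h2 (h1 hw)))
    · exact closure_mono Set.inter_subset_right hw
  have hKne : (closure (B ∩ T)).Nonempty :=
    ⟨z, subset_closure ⟨Metric.mem_ball_self (by linarith), hzT⟩⟩
  obtain ⟨f, hrange, -, hinj⟩ := hK.exists_nat_bool_injection hKne
  have hKct : (closure (B ∩ T)).Countable := hct.mono hKsub
  have : Countable (ℕ → Bool) := by
    have := hKct.to_subtype
    have hg : Function.Injective
        (fun x : ℕ → Bool => (⟨f x, hrange ⟨x, rfl⟩⟩ : closure (B ∩ T))) := by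
      intro a b hab
      exact hinj (congrArg Subtype.val hab)
    exact hg.countable
  rw [← Cardinal.mk_le_aleph0_iff] at this
  simp [Cardinal.mk_arrow] at this
  exact absurd this (not_le.mpr Cardinal.aleph0_lt_continuum)

end Aux

theorem stmt_16 (D : Set ℂ) (hD : IsOpen D) (hDc : IsConnected D)
    (S : ℕ → ℂ → ℂ) (hS : ∀ n, MeromorphicOn (S n) D)
    (E : Set ℂ) (hE : E = {z | z ∈ D ∧ ¬ C0Point D S z}) :
    E.Countable ↔ ∃ α : Ordinal, α.card ≤ Cardinal.aleph0 ∧ ∀ z ∈ D, CPoint D S α z := by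
  have hEsub : E ⊆ D := by rw [hE]; exact fun z hz => hz.1
  have hEc : ∀ z ∈ D ∩ closure E, z ∈ E := by
    rintro z ⟨hzD, hzcl⟩
    by_contra hzE
    have hC0 : C0Point D S z := by
      by_contra h
      exact hzE (hE ▸ ⟨hzD, h⟩)
    obtain ⟨r, hr, hball, hC0b⟩ := c0_ball D S z hC0
    rw [Metric.mem_closure_iff] at hzcl
    obtain ⟨y, hyE, hyd⟩ := hzcl r hr
    have : y ∈ Metric.ball z r := by rwa [Metric.mem_ball, dist_comm]
    rw [hE] at hyE
    exact hyE.2 (hC0b y this)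
  constructor
  · -- E countable → exists countable α
    intro hct
    -- find a countable stabilization point
    have hstab : ∃ α : Ordinal, α < (Cardinal.aleph 1).ord ∧
        derivIter D E α = derivIter D E (Order.succ α) := by
      by_contra hcon
      push_neg at hcon
      have hproper : ∀ α < (Cardinal.aleph 1).ord,
          (derivIter D E α \ derivIter D E (Order.succ α)).Nonempty := by
        intro α hα
        rw [Set.diff_nonempty]
        intro hsub
        exact hcon α hα (Set.Subset.antisymm hsub (derivIter_succ_subset hEsub hEc α))
      choose! f hf using fun α (hα : α < (Cardinal.aleph 1).ord) => hproper α hα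
      have hmaps : Set.MapsTo f (Set.Iio ((Cardinal.aleph 1).ord)) E := by
        intro α hα
        have h1 := (hf α hα).1
        have h2 : derivIter D E α ⊆ derivIter D E 0 :=
          derivIter_anti hEsub hEc α 0 zero_le
        have := h2 h1
        rwa [derivIter_zero'] at this
      have key : ∀ α, α < (Cardinal.aleph 1).ord → ∀ β, β < (Cardinal.aleph 1).ord →
          α < β → f α ≠ f β := by
        intro α hα β hβ hlt hfe
        have h1 : f β ∈ derivIter D E β := (hf β hβ).1
        have h2 : derivIter D E β ⊆ derivIter D E (Order.succ α) :=
          derivIter_anti hEsub hEc β (Order.succ α) (Order.succ_le_of_lt hlt)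
        have h3 : f α ∉ derivIter D E (Order.succ α) := (hf α hα).2
        exact h3 (hfe ▸ h2 h1)
      have hinj : Set.InjOn f (Set.Iio ((Cardinal.aleph 1).ord)) := by
        intro α hα β hβ hfe
        rcases lt_trichotomy α β with h | h | h
        · exact absurd hfe (key α hα β hβ h)
        · exact h
        · exact absurd hfe.symm (key β hβ α hα h)
      have hIct : (Set.Iio ((Cardinal.aleph 1).ord)).Countable :=
        hmaps.countable_of_injOn hinj hct
      have hmk := Ordinal.mk_Iio_ordinal ((Cardinal.aleph 1).ord)
      rw [Cardinal.card_ord] at hmk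
      have hlift : Cardinal.lift (Cardinal.aleph 1) ≤ Cardinal.aleph0 := by
        rw [← hmk, Cardinal.le_aleph0_iff_set_countable]
        exact hIct
      rw [Cardinal.lift_le_aleph0] at hlift
      exact absurd hlift (not_le.mpr Cardinal.aleph0_lt_aleph_one)
    obtain ⟨α, hα, hfix⟩ := hstab
    -- the fixed set must be empty
    have hempty : derivIter D E α = ∅ := by
      by_contra hne
      rw [show (¬ derivIter D E α = ∅) = (derivIter D E α ≠ ∅) from rfl,
        ← Set.nonempty_iff_ne_empty] at hne
      have hsubD := (derivIter_subset_closed hEsub hEc α).1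
      have hclosed := (derivIter_subset_closed hEsub hEc α).2
      have hpre : ∀ z ∈ derivIter D E α, AccPt z (𝓟 (derivIter D E α)) := by
        intro z hz
        have : z ∈ derivIter D E (Order.succ α) := hfix ▸ hz
        rw [derivIter_succ'] at this
        exact this.2
      have hTct : (derivIter D E α).Countable := by
        apply hct.mono
        have := derivIter_anti hEsub hEc α 0 zero_le
        rwa [derivIter_zero'] at this
      exact preperfect_uncountable hD hsubD hclosed hpre hne hTct
    refine ⟨α, ?_, ?_⟩
    · rw [Cardinal.lt_ord] at hα
      rwa [← Cardinal.succ_aleph0, Order.lt_succ_iff] at hα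
    · intro z hzD
      apply notin_deriv_cpoint hD hE α z hzD
      rw [hempty]
      exact Set.notMem_empty z
  · -- exists countable α → E countable
    rintro ⟨α, hcard, hall⟩
    have hempty : derivIter D E α = ∅ := by
      rw [Set.eq_empty_iff_forall_notMem]
      intro z hz
      have hzD : z ∈ D := (derivIter_subset_closed hEsub hEc α).1 hz
      exact cpoint_notin_deriv hE α z hzD (hall z hzD) hz
    -- E is covered by isolated points of the stages
    have hcover : E ⊆ ⋃ γ ∈ Set.Iio α,
        {z | z ∈ derivIter D E γ ∧ ¬ AccPt z (𝓟 (derivIter D E γ))} := by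
      intro z hzE
      have hzD : z ∈ D := hEsub hzE
      have hT : ∃ β, z ∉ derivIter D E β := ⟨α, hempty ▸ Set.notMem_empty z⟩
      classical
      set β₀ := Ordinal.lt_wf.min {β | z ∉ derivIter D E β} hT with hβ₀def
      have hβ₀mem : z ∉ derivIter D E β₀ := Ordinal.lt_wf.min_mem _ hT
      have hβ₀min : ∀ γ < β₀, z ∈ derivIter D E γ := by
        intro γ hγ
        by_contra h
        exact Ordinal.lt_wf.not_lt_min _ h hγ
      have hβ₀le : β₀ ≤ α := by
        by_contra h
        push_neg at h
        exact hβ₀mem (hβ₀min α h |> fun hh => absurd hh (hempty ▸ Set.notMem_empty z))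
      rcases Ordinal.zero_or_succ_or_isSuccLimit β₀ with h0 | ⟨γ, hγ⟩ | hlim
      · exfalso
        apply hβ₀mem
        rw [h0, derivIter_zero']
        exact hzE
      · have hγlt : γ < β₀ := hγ ▸ Order.lt_succ γ
        have hzγ : z ∈ derivIter D E γ := hβ₀min γ hγlt
        have hznacc : ¬ AccPt z (𝓟 (derivIter D E γ)) := by
          intro hacc
          apply hβ₀mem
          rw [← hγ, derivIter_succ']
          exact ⟨hzD, hacc⟩
        refine Set.mem_biUnion (?_ : γ ∈ Set.Iio α) ⟨hzγ, hznacc⟩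
        exact lt_of_lt_of_le (hγ ▸ Order.lt_succ γ) hβ₀le
      · exfalso
        apply hβ₀mem
        rw [derivIter_limit' _ _ _ hlim]
        refine Set.mem_iInter.mpr fun γ => Set.mem_iInter.mpr fun hγ => Set.mem_iInter.mpr
          fun _ => hβ₀min γ hγ
    have hIio : (Set.Iio α).Countable := by
      rw [← Cardinal.le_aleph0_iff_set_countable, Ordinal.mk_Iio_ordinal,
        Cardinal.lift_le_aleph0]
      exact hcard
    exact Set.Countable.mono hcover
      (hIio.biUnion fun γ _ => countable_isolated (derivIter D E γ))
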